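/- Compatibility transport under deformation: with g = h†∘η∘h, γ a g-compatible connection, and the deformed pair defined by D⁺_a x = h(∇⁺_a(h⁻¹(x))), D⁻_a x = h*(∇⁻_a(h†(x))), the deformed covariant derivative of η satisfies (D⁺⁺_a η)(b) = h*((∇⁺⁺_a g)(h⁻¹(b))) for every vector field b; hence ∇⁺⁺_a g = 0 implies D⁺⁺_a η = 0. -/

import Mathlib

open scoped RealInnerProductSpace
open ContinuousLinearMap

noncomputable section

/-- Euclidean space ℝⁿ. -/
abbrev Ev (n : ℕ) := EuclideanSpace ℝ (Fin n)

/-- The covariant derivative `∇⁺_a x = a·∂x + γ_a(x)` determined by a connection field `γ`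
(at each point `p`, `γ p v` is the operator `γ_a` with `a(p) = v`). -/
def covP {n : ℕ} (γ : Ev n → Ev n →L[ℝ] Ev n →L[ℝ] Ev n) (a x : Ev n → Ev n) (p : Ev n) :
    Ev n :=
  fderiv ℝ x p (a p) + γ p (a p) (x p)

/-- The covariant derivative `∇⁻_a x = a·∂x − γ_a†(x)`, with `γ_a†` the pointwise
Euclidean adjoint of `γ_a`. -/
def covM {n : ℕ} (γ : Ev n → Ev n →L[ℝ] Ev n →L[ℝ] Ev n) (a x : Ev n → Ev n) (p : Ev n) :
    Ev n :=
  fderiv ℝ x p (a p) - adjoint (γ p (a p)) (x p)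

/-- compatibility transport under deformation: with `g = h†∘η∘h`, `γ`
`g`-compatible, and the deformed pair `D⁺_a x = h(∇⁺_a(h⁻¹(x)))`, `D⁻_a x = h*(∇⁻_a(h†(x)))`,
one has `(D⁺⁺_a η)(b) = h*((∇⁺⁺_a g)(h⁻¹(b)))`; hence `∇⁺⁺_a g = 0` implies `D⁺⁺_a η = 0`. -/
theorem compatibility_transport {n : ℕ} (U : Set (Ev n)) (hU : IsOpen U)
    (h : Ev n → Ev n →L[ℝ] Ev n) (hh : ContDiffOn ℝ (⊤ : ℕ∞) h U)
    (hinv : Ev n → Ev n →L[ℝ] Ev n)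
    (hhinv : ∀ p ∈ U, (∀ x : Ev n, h p (hinv p x) = x) ∧ ∀ x : Ev n, hinv p (h p x) = x)
    (η : Ev n →L[ℝ] Ev n)
    (hηsymm : ∀ x y : Ev n, ⟪η x, y⟫ = ⟪x, η y⟫) (hηinv : Function.Bijective η)
    (g : Ev n → Ev n →L[ℝ] Ev n)
    (hgdef : ∀ p ∈ U, g p = (adjoint (h p)).comp (η.comp (h p)))
    (γ : Ev n → Ev n →L[ℝ] Ev n →L[ℝ] Ev n)
    (hcompat : ∀ p ∈ U, ∀ v w : Ev n,
      g p (γ p v w) + adjoint (γ p v) (g p w) = (fderiv ℝ g p v) w)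
    (a : Ev n → Ev n) (ha : ContDiffOn ℝ (⊤ : ℕ∞) a U) :
    (∀ b : Ev n → Ev n, ContDiffOn ℝ (⊤ : ℕ∞) b U → ∀ p ∈ U,
      adjoint (hinv p) (covM γ a (fun q => adjoint (h q) (η (b q))) p)
          - η (h p (covP γ a (fun q => hinv q (b q)) p))
        = adjoint (hinv p)
            (covM γ a (fun q => g q (hinv q (b q))) p
              - g p (covP γ a (fun q => hinv q (b q)) p)))
    ∧ ((∀ x : Ev n → Ev n, ContDiffOn ℝ (⊤ : ℕ∞) x U → ∀ p ∈ U,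
          covM γ a (fun q => g q (x q)) p - g p (covP γ a x p) = 0) →
        ∀ b : Ev n → Ev n, ContDiffOn ℝ (⊤ : ℕ∞) b U → ∀ p ∈ U,
          adjoint (hinv p) (covM γ a (fun q => adjoint (h q) (η (b q))) p)
            - η (h p (covP γ a (fun q => hinv q (b q)) p)) = 0) := by
  have munit : ∀ r ∈ U, (h r * hinv r = (1 : Ev n →L[ℝ] Ev n))
      ∧ (hinv r * h r = (1 : Ev n →L[ℝ] Ev n)) := by
    intro r hr
    constructor
    · refine ContinuousLinearMap.ext fun x => ?_
      simpa using (hhinv r hr).1 x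
    · refine ContinuousLinearMap.ext fun x => ?_
      simpa using (hhinv r hr).2 x
  have key : ∀ b : Ev n → Ev n, ∀ p ∈ U,
      adjoint (hinv p) (covM γ a (fun q => adjoint (h q) (η (b q))) p)
          - η (h p (covP γ a (fun q => hinv q (b q)) p))
        = adjoint (hinv p)
            (covM γ a (fun q => g q (hinv q (b q))) p
              - g p (covP γ a (fun q => hinv q (b q)) p)) := by
    intro b p hp
    have hcomp : (h p).comp (hinv p) = ContinuousLinearMap.id ℝ (Ev n) := (munit p hp).1
    have heq : (fun q => adjoint (h q) (η (b q))) =ᶠ[nhds p]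
        (fun q => g q (hinv q (b q))) := by
      filter_upwards [hU.mem_nhds hp] with q hq
      rw [hgdef q hq]
      simp [(hhinv q hq).1]
    have hcovM : covM γ a (fun q => adjoint (h q) (η (b q))) p
        = covM γ a (fun q => g q (hinv q (b q))) p := by
      unfold covM
      rw [heq.fderiv_eq]
      congr 1
      exact congrArg _ heq.eq_of_nhds
    rw [hcovM, map_sub]
    congr 1
    rw [hgdef p hp]
    set y := covP γ a (fun q => hinv q (b q)) p
    have h2 : adjoint (hinv p) ((adjoint (h p)) (η (h p y)))
        = (adjoint ((h p).comp (hinv p))) (η (h p y)) := by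
      rw [ContinuousLinearMap.adjoint_comp]; rfl
    simp only [ContinuousLinearMap.comp_apply]
    rw [h2, hcomp]
    simp [ContinuousLinearMap.adjoint_id]
  refine ⟨fun b _ => key b, ?_⟩
  intro H b hb p hp
  have hx : ContDiffOn ℝ (⊤ : ℕ∞) (fun q => hinv q (b q)) U := by
    intro q hq
    have hru : ∀ r ∈ U, Ring.inverse (h r) = hinv r := by
      intro r hr
      have hiu : IsUnit (h r) := ⟨⟨h r, hinv r, (munit r hr).1, (munit r hr).2⟩, rfl⟩
      obtain ⟨u, hu⟩ := hiu
      rw [← hu, Ring.inverse_unit]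
      exact Units.inv_eq_of_mul_eq_one_right (by rw [hu]; exact (munit r hr).1)
    have hca : ContDiffAt ℝ (⊤ : ℕ∞) (fun r => Ring.inverse (h r) (b r)) q := by
      have hinvAt : ContDiffAt ℝ (⊤ : ℕ∞) (fun r => Ring.inverse (h r)) q := by
        have hiu : IsUnit (h q) := ⟨⟨h q, hinv q, (munit q hq).1, (munit q hq).2⟩, rfl⟩
        obtain ⟨u, huq⟩ := hiu
        have hcd : ContDiffAt ℝ (⊤ : ℕ∞) (Ring.inverse : (Ev n →L[ℝ] Ev n) → _) (h q) := by
          rw [← huq]; exact contDiffAt_ringInverse ℝ u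
        exact hcd.comp q (hh.contDiffAt (hU.mem_nhds hq))
      exact hinvAt.clm_apply (hb.contDiffAt (hU.mem_nhds hq))
    have : ContDiffAt ℝ (⊤ : ℕ∞) (fun r => hinv r (b r)) q := by
      refine hca.congr_of_eventuallyEq ?_
      filter_upwards [hU.mem_nhds hq] with r hr
      rw [hru r hr]
    exact this.contDiffWithinAt
  rw [key b p hp, H _ hx p hp, map_zero]
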